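/- The Jacobian determinant of the Möbius translation T_a at x ∈ B^n equals ((1 - ‖a‖²)/(1 - 2⟨x,a⟩ + ‖x‖²‖a‖²))^n. -/

import Mathlib

/-- Möbius addition on the unit ball of ℝⁿ. -/
noncomputable def mobiusAdd {n : ℕ} (x y : EuclideanSpace ℝ (Fin n)) :
    EuclideanSpace ℝ (Fin n) :=
  ((1 + 2 * (inner ℝ x y : ℝ) + ‖y‖ ^ 2) / (1 + 2 * (inner ℝ x y : ℝ) + ‖x‖ ^ 2 * ‖y‖ ^ 2)) • x
    + ((1 - ‖x‖ ^ 2) / (1 + 2 * (inner ℝ x y : ℝ) + ‖x‖ ^ 2 * ‖y‖ ^ 2)) • y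

/-- Möbius translation `T_a x = (-a) ⊕ x`. -/
noncomputable def mobiusTrans {n : ℕ} (a x : EuclideanSpace ℝ (Fin n)) :
    EuclideanSpace ℝ (Fin n) :=
  mobiusAdd (-a) x

/-!
Write `mobiusAdd b y = D(y)⁻¹ • (N(y) • b + (1 - ‖b‖²) • y)` with
`N(y) = 1 + 2⟪b, y⟫ + ‖y‖²` and `D(y) = 1 + 2⟪b, y⟫ + ‖b‖²‖y‖²`. The quotient rule shows that the
derivative at `x` is `(1 - ‖b‖²) / D(x)` times a perturbation `id + φ ⊗ b + ψ ⊗ x` of the identity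
of rank two. By the matrix determinant lemma the determinant of that perturbation is a `2 × 2`
determinant, which collapses to `1` because its numerator is `D(x)²`. Finally `T_a = mobiusAdd (-a)`.
-/

open scoped RealInnerProductSpace

open Module in
theorem LinearMap.det_id_add_smulRight_add_smulRight {R M : Type*} [CommRing R] [AddCommGroup M]
    [Module R M] [Free R M] [Module.Finite R M] (f g : M →ₗ[R] R) (u w : M) :
    LinearMap.det (LinearMap.id + f.smulRight u + g.smulRight w)
      = (1 + f u) * (1 + g w) - f w * g u := by
  classical
  set b := Free.chooseBasis R M
  let A : Matrix (Free.ChooseBasisIndex R M) (Fin 2) R :=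
    Matrix.of fun i => ![b.repr u i, b.repr w i]
  let B : Matrix (Fin 2) (Free.ChooseBasisIndex R M) R := Matrix.of ![f ∘ b, g ∘ b]
  have hmatrix : toMatrix b b (LinearMap.id + f.smulRight u + g.smulRight w) = 1 + A * B := by
    ext i j
    simp [A, B, Matrix.mul_apply, Matrix.vecMulVec_apply, add_assoc]
  have hpair (φ : M →ₗ[R] R) (v : M) : ∑ j, φ (b j) * b.repr v j = φ v := by
    conv_rhs => rw [← b.sum_repr v, map_sum]
    simp only [map_smul, smul_eq_mul, mul_comm]
  rw [← det_toMatrix b, hmatrix, Matrix.det_one_add_mul_comm, Matrix.det_fin_two]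
  simp [A, B, Matrix.vecMul, dotProduct, hpair]

section InnerProductSpace

variable {E : Type*} [NormedAddCommGroup E] [InnerProductSpace ℝ E]

theorem one_add_two_inner_add_norm_sq_mul_norm_sq_pos {b x : E} (h : ‖b‖ * ‖x‖ < 1) :
    0 < 1 + 2 * ⟪b, x⟫ + ‖b‖ ^ 2 * ‖x‖ ^ 2 := by
  have hinner : -(‖b‖ * ‖x‖) ≤ ⟪b, x⟫ := neg_le_of_abs_le (abs_real_inner_le_norm b x)
  nlinarith [pow_pos (sub_pos.2 h) 2]

theorem hasFDerivAt_one_add_two_inner_add_mul_norm_sq (b x : E) (r : ℝ) :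
    HasFDerivAt (fun y => 1 + 2 * ⟪b, y⟫ + r * ‖y‖ ^ 2)
      ((2 : ℝ) • innerSL ℝ b + (2 * r) • innerSL ℝ x) x := by
  refine ((((innerSL ℝ b).hasFDerivAt).const_mul 2).const_add 1 |>.add
    ((hasFDerivAt_id x).norm_sq.const_mul r)).congr_fderiv ?_
  ext v
  simp only [id_eq, ContinuousLinearMap.comp_id, add_apply, smul_apply, coe_innerSL_apply,
    smul_eq_mul, nsmul_eq_mul, Nat.cast_ofNat]
  ring

end InnerProductSpace

section MobiusAdd

variable {n : ℕ} (b x : EuclideanSpace ℝ (Fin n))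

theorem hasFDerivAt_mobiusAdd (hD : 1 + 2 * ⟪b, x⟫ + ‖b‖ ^ 2 * ‖x‖ ^ 2 ≠ 0) :
    HasFDerivAt (mobiusAdd b)
      (((1 - ‖b‖ ^ 2) / (1 + 2 * ⟪b, x⟫ + ‖b‖ ^ 2 * ‖x‖ ^ 2)) •
        (ContinuousLinearMap.id ℝ _
          + ((2 / (1 + 2 * ⟪b, x⟫ + ‖b‖ ^ 2 * ‖x‖ ^ 2)) •
              ((1 + 2 * ⟪b, x⟫) • innerSL ℝ x - ‖x‖ ^ 2 • innerSL ℝ b)).smulRight b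
          + ((-2 / (1 + 2 * ⟪b, x⟫ + ‖b‖ ^ 2 * ‖x‖ ^ 2)) •
              (innerSL ℝ b + ‖b‖ ^ 2 • innerSL ℝ x)).smulRight x)) x := by
  have hmob : mobiusAdd b = fun y => (1 + 2 * ⟪b, y⟫ + ‖b‖ ^ 2 * ‖y‖ ^ 2)⁻¹ •
      ((1 + 2 * ⟪b, y⟫ + 1 * ‖y‖ ^ 2) • b + (1 - ‖b‖ ^ 2) • y) := by
    ext1 y
    simp only [mobiusAdd, one_mul, div_eq_inv_mul, smul_add, smul_smul]
  have hinv := (hasDerivAt_inv hD).comp_hasFDerivAt x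
    (hasFDerivAt_one_add_two_inner_add_mul_norm_sq b x _)
  have hnum := ((hasFDerivAt_one_add_two_inner_add_mul_norm_sq b x 1).smul_const b).add
    ((hasFDerivAt_id x).const_smul (1 - ‖b‖ ^ 2))
  rw [hmob]
  refine (hinv.smul hnum).congr_fderiv ?_
  ext1 v
  simp only [Function.comp_apply, mul_one, smul_add, neg_smul, one_mul, Pi.add_apply,
    Pi.smul_apply, id_eq, add_apply, smul_apply, neg_apply, sub_apply, coe_innerSL_apply,
    smul_eq_mul, ContinuousLinearMap.smulRight_apply, ContinuousLinearMap.id_apply]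
  match_scalars <;> field_simp; ring

theorem det_fderiv_mobiusAdd (hD : 1 + 2 * ⟪b, x⟫ + ‖b‖ ^ 2 * ‖x‖ ^ 2 ≠ 0) :
    LinearMap.det (fderiv ℝ (mobiusAdd b) x :
        EuclideanSpace ℝ (Fin n) →ₗ[ℝ] EuclideanSpace ℝ (Fin n))
      = ((1 - ‖b‖ ^ 2) / (1 + 2 * ⟪b, x⟫ + ‖b‖ ^ 2 * ‖x‖ ^ 2)) ^ n := by
  have hcoe (φ : EuclideanSpace ℝ (Fin n) →L[ℝ] ℝ) (u : EuclideanSpace ℝ (Fin n)) :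
      (φ.smulRight u : EuclideanSpace ℝ (Fin n) →ₗ[ℝ] EuclideanSpace ℝ (Fin n))
        = (φ : EuclideanSpace ℝ (Fin n) →ₗ[ℝ] ℝ).smulRight u := rfl
  rw [(hasFDerivAt_mobiusAdd b x hD).fderiv, ContinuousLinearMap.toLinearMap_smul,
    ContinuousLinearMap.toLinearMap_add, ContinuousLinearMap.toLinearMap_add,
    ContinuousLinearMap.coe_id, hcoe, hcoe, LinearMap.det_smul, finrank_euclideanSpace_fin,
    LinearMap.det_id_add_smulRight_add_smulRight]
  convert mul_one _
  simp only [ContinuousLinearMap.toLinearMap_smul, ContinuousLinearMap.toLinearMap_sub,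
    ContinuousLinearMap.toLinearMap_add, ContinuousLinearMap.toLinearMap_innerSL_apply,
    LinearMap.smul_apply, LinearMap.sub_apply, LinearMap.add_apply, innerₛₗ_apply_apply,
    real_inner_comm b x, smul_eq_mul, inner_self_eq_norm_sq_to_K, Real.ringHom_apply, smul_add]
  field_simp
  ring

end MobiusAdd

theorem mobiusTrans_jacobian_det_general {n : ℕ}
    (a x : EuclideanSpace ℝ (Fin n)) (ha : ‖a‖ < 1) (hx : ‖x‖ < 1) :
    LinearMap.det
        ((fderiv ℝ (mobiusTrans a) x : EuclideanSpace ℝ (Fin n) →L[ℝ] EuclideanSpace ℝ (Fin n)) :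
          EuclideanSpace ℝ (Fin n) →ₗ[ℝ] EuclideanSpace ℝ (Fin n))
      = ((1 - ‖a‖ ^ 2) / (1 - 2 * (inner ℝ x a : ℝ) + ‖x‖ ^ 2 * ‖a‖ ^ 2)) ^ n := by
  have hnorm : ‖-a‖ * ‖x‖ < 1 := by
    rw [norm_neg]
    exact mul_lt_one_of_nonneg_of_lt_one_left (norm_nonneg a) ha hx.le
  rw [show mobiusTrans a = mobiusAdd (-a) from rfl,
    det_fderiv_mobiusAdd _ _ (one_add_two_inner_add_norm_sq_mul_norm_sq_pos hnorm).ne',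
    norm_neg, inner_neg_left, real_inner_comm]
  ring

theorem mobiusTrans_jacobian_det {n : ℕ} (hn : 2 ≤ n)
    (a x : EuclideanSpace ℝ (Fin n)) (ha : ‖a‖ < 1) (hx : ‖x‖ < 1) :
    LinearMap.det
        ((fderiv ℝ (mobiusTrans a) x : EuclideanSpace ℝ (Fin n) →L[ℝ] EuclideanSpace ℝ (Fin n)) :
          EuclideanSpace ℝ (Fin n) →ₗ[ℝ] EuclideanSpace ℝ (Fin n))
      = ((1 - ‖a‖ ^ 2) / (1 - 2 * (inner ℝ x a : ℝ) + ‖x‖ ^ 2 * ‖a‖ ^ 2)) ^ n :=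
  mobiusTrans_jacobian_det_general a x ha hx
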